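/- arXiv:2009.12820 — 2 statements merged into one kernel-verified Lean document; each statement's English description precedes it below -/
import Mathlib

section
/- Let M ∈ ℝ^{d×d} be symmetric positive semidefinite, C ∈ ℝ^{d×d} positive semidefinite, λ > 0, t ≥ 0, and define φ̄_{λ,t}(M) = ‖C^{1/2}(I − (M+λI)⁻¹M)‖_F² + t·Tr(C(M+λI)⁻²M). Then φ̄_{λ,t}(M) ≤ (λ + t)·Tr(C(M+λI)⁻¹). -/
/-!
With `R = (M + λ)⁻¹` one has `R M = M R = 1 - λ R`. Hence the Frobenius term equals
`λ² tr(C R²)`, and `(λ + t) tr(C R) - φ̄ = λ tr(C R (M + t) R)`, which is nonnegative since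
`R (M + t) R` is positive semidefinite and `C = S S` with `S` symmetric.
-/

open Matrix

namespace Matrix

section Resolvent

variable {K : Type*} [Field K] {n : Type*} [Fintype n] [DecidableEq n]
  {M : Matrix n n K} {lam : K}

theorem inv_add_smul_one_mul (h : IsUnit (M + lam • 1).det) :
    (M + lam • 1)⁻¹ * M = 1 - lam • (M + lam • 1)⁻¹ := by
  rw [eq_sub_iff_add_eq]
  calc _ = (M + lam • 1)⁻¹ * (M + lam • 1) := by rw [mul_add, Matrix.mul_smul, mul_one]
    _ = 1 := nonsing_inv_mul _ h

theorem mul_inv_add_smul_one (h : IsUnit (M + lam • 1).det) :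
    M * (M + lam • 1)⁻¹ = 1 - lam • (M + lam • 1)⁻¹ := by
  rw [eq_sub_iff_add_eq]
  calc _ = (M + lam • 1) * (M + lam • 1)⁻¹ := by rw [add_mul, Matrix.smul_mul, one_mul]
    _ = 1 := mul_nonsing_inv _ h

theorem one_sub_inv_add_smul_one_mul (h : IsUnit (M + lam • 1).det) :
    1 - (M + lam • 1)⁻¹ * M = lam • (M + lam • 1)⁻¹ := by
  rw [inv_add_smul_one_mul h, sub_sub_cancel]

theorem smul_inv_sub_eq_smul_inv_mul_mul_inv (h : IsUnit (M + lam • 1).det) (t : K) :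
    (lam + t) • (M + lam • 1)⁻¹
        - (lam ^ 2 • ((M + lam • 1)⁻¹ * (M + lam • 1)⁻¹)
          + t • ((M + lam • 1)⁻¹ * (M + lam • 1)⁻¹ * M))
      = lam • ((M + lam • 1)⁻¹ * (M + t • 1) * (M + lam • 1)⁻¹) := by
  set R := (M + lam • 1)⁻¹
  have hRRM : R * R * M = R - lam • (R * R) := by
    rw [mul_assoc, inv_add_smul_one_mul h, mul_sub, mul_one, mul_smul_comm]
  have hRMR : R * M * R = R - lam • (R * R) := by
    rw [mul_assoc, mul_inv_add_smul_one h, mul_sub, mul_one, mul_smul_comm]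
  rw [hRRM, mul_add, add_mul, hRMR, mul_smul_comm, smul_mul_assoc, mul_one]
  module

end Resolvent

section Symmetric

variable {R : Type*} {m n : Type*} [Fintype m] [Fintype n]

theorem sum_sq_apply_eq_trace_transpose_mul [CommSemiring R] (X : Matrix m n R) :
    ∑ i, ∑ j, X i j ^ 2 = trace (Xᵀ * X) := by
  simp only [trace, diag, mul_apply, transpose_apply, sq]
  exact Finset.sum_comm

theorem sum_sq_mul_apply_eq_trace [CommSemiring R] {S B : Matrix n n R}
    (hS : Sᵀ = S) (hB : Bᵀ = B) :
    ∑ i, ∑ j, (S * B) i j ^ 2 = trace (S * S * (B * B)) := by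
  rw [sum_sq_apply_eq_trace_transpose_mul, transpose_mul, hS, hB, trace_mul_comm (S * S)]
  simp only [← mul_assoc]
  rw [trace_mul_comm (B * S * S) B]
  simp only [← mul_assoc]

theorem PosSemidef.inv_mul_mul_inv [CommRing R] [PartialOrder R] [StarRing R] [DecidableEq n]
    {A P : Matrix n n R} (hA : A.IsHermitian) (hP : P.PosSemidef) :
    (A⁻¹ * P * A⁻¹).PosSemidef := by
  simpa only [hA.inv.eq] using hP.mul_mul_conjTranspose_same A⁻¹

theorem PosSemidef.trace_mul_self_mul_nonneg [CommRing R] [PartialOrder R] [StarRing R]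
    [StarOrderedRing R] {S P : Matrix n n R} (hP : P.PosSemidef) (hS : Sᴴ = S) :
    0 ≤ trace (S * S * P) := by
  rw [mul_assoc, trace_mul_comm, mul_assoc, ← mul_assoc]
  simpa only [hS] using (hP.mul_mul_conjTranspose_same S).trace_nonneg

end Symmetric

end Matrix

theorem phibar_le_transductive_general {d : ℕ}
    (M C Csqrt : Matrix (Fin d) (Fin d) ℝ) (hM : M.PosSemidef)
    (hsq : Csqrt * Csqrt = C) (hsym : Csqrtᵀ = Csqrt)
    (lam t : ℝ) (hlam : 0 < lam) (ht : 0 ≤ t) :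
    (∑ i, ∑ j, ((Csqrt * (1 - (M + lam • 1)⁻¹ * M)) i j) ^ 2)
      + t * Matrix.trace (C * ((M + lam • 1)⁻¹ * (M + lam • 1)⁻¹ * M))
      ≤ (lam + t) * Matrix.trace (C * (M + lam • 1)⁻¹) := by
  have hA : (M + lam • 1).PosDef := PosDef.posSemidef_add hM (PosDef.one.smul hlam)
  have hdet : IsUnit (M + lam • 1).det := (isUnit_iff_isUnit_det _).mp hA.isUnit
  have hR : ((M + lam • 1)⁻¹)ᵀ = (M + lam • 1)⁻¹ := by
    rw [← conjTranspose_eq_transpose_of_trivial, hA.isHermitian.inv.eq]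
  have hfrob : ∑ i, ∑ j, ((Csqrt * (1 - (M + lam • 1)⁻¹ * M)) i j) ^ 2
      = lam ^ 2 * trace (C * ((M + lam • 1)⁻¹ * (M + lam • 1)⁻¹)) := by
    rw [one_sub_inv_add_smul_one_mul hdet,
      sum_sq_mul_apply_eq_trace hsym (by rw [transpose_smul, hR]), hsq,
      smul_mul_smul_comm, Matrix.mul_smul, trace_smul, smul_eq_mul, sq]
  have hgap : (lam + t) * trace (C * (M + lam • 1)⁻¹)
      - (lam ^ 2 * trace (C * ((M + lam • 1)⁻¹ * (M + lam • 1)⁻¹))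
        + t * trace (C * ((M + lam • 1)⁻¹ * (M + lam • 1)⁻¹ * M)))
      = lam * trace (C * ((M + lam • 1)⁻¹ * (M + t • 1) * (M + lam • 1)⁻¹)) := by
    have := congrArg (fun X ↦ trace (C * X)) (smul_inv_sub_eq_smul_inv_mul_mul_inv hdet t)
    simpa only [mul_sub, mul_add, Matrix.mul_smul, trace_sub, trace_add, trace_smul, smul_eq_mul]
      using this
  have hnonneg :
      0 ≤ trace (C * ((M + lam • 1)⁻¹ * (M + t • 1) * (M + lam • 1)⁻¹)) := by
    rw [← hsq]
    exact (PosSemidef.inv_mul_mul_inv hA.isHermitian (hM.add (PosSemidef.one.smul ht)))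
      |>.trace_mul_self_mul_nonneg (by rwa [conjTranspose_eq_transpose_of_trivial])
  rw [hfrob]
  linarith [mul_nonneg hlam.le hnonneg]

theorem phibar_le_transductive {d : ℕ}
    (M C Csqrt : Matrix (Fin d) (Fin d) ℝ) (hM : M.PosSemidef) (hC : C.PosSemidef)
    (hsq : Csqrt * Csqrt = C) (hsym : Csqrtᵀ = Csqrt)
    (lam t : ℝ) (hlam : 0 < lam) (ht : 0 ≤ t) :
    (∑ i, ∑ j, ((Csqrt * (1 - (M + lam • 1)⁻¹ * M)) i j) ^ 2)
      + t * Matrix.trace (C * ((M + lam • 1)⁻¹ * (M + lam • 1)⁻¹ * M))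
      ≤ (lam + t) * Matrix.trace (C * (M + lam • 1)⁻¹) :=
  phibar_le_transductive_general M C Csqrt hM hsq hsym lam t hlam ht
end

section
/- Let V ∈ ℝ^{m×d}, K = VVᵀ, and S ⊆ [m] with K_{S,S} + λI invertible, λ ≥ 0. With M = V_SᵀV_S and M_λ = M + λI_d, the quantity ‖V(I_d − M_λ^+M)‖_F² + t·Tr(V M_λ^{+2} M Vᵀ) equals Tr(K) + J, where J = Tr(K_{:,S}[(K_{S,S}+λI)⁻¹(−2I + K_{S,S}(K_{S,S}+λI)⁻¹) + t(K_{S,S}+λI)⁻²] K_{:,S}ᵀ). -/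
/-
The pseudoinverse only enters through `P * Vₛᵀ`, where `P = (Vₛᵀ Vₛ + λ I)⁺`. Writing
`N = Vₛ Vₛᵀ + λ I`, the intertwining relation `(Vₛᵀ Vₛ + λ I) Vₛᵀ = Vₛᵀ N` turns into
`P Vₛᵀ = Vₛᵀ N⁻¹` for any Moore–Penrose inverse of a symmetric matrix, so `P M = Vₛᵀ N⁻¹ Vₛ` and
`P² M = Vₛᵀ N⁻² Vₛ`. A Moore–Penrose inverse exists: for `λ ≠ 0` the matrix `Vₛᵀ Vₛ + λ I` is
invertible, with inverse `λ⁻¹ (I - Vₛᵀ N⁻¹ Vₛ)`, and for `λ = 0` it is `R Rᵀ` with the right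
inverse `R = Vₛᵀ N⁻¹` of `Vₛ`. The identity is then trace algebra, using `‖X‖_F² = Tr (X Xᵀ)`.
-/

open Matrix Classical

noncomputable section

/-- `B` satisfies the four Penrose conditions for `A`. -/
def IsMoorePenrose {m n : ℕ} (A : Matrix (Fin m) (Fin n) ℝ)
    (B : Matrix (Fin n) (Fin m) ℝ) : Prop :=
  A * B * A = A ∧ B * A * B = B ∧ (A * B)ᵀ = A * B ∧ (B * A)ᵀ = B * A

/-- The Moore–Penrose pseudoinverse of a real matrix. -/
def pinv {m n : ℕ} (A : Matrix (Fin m) (Fin n) ℝ) : Matrix (Fin n) (Fin m) ℝ :=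
  if h : ∃ B, IsMoorePenrose A B then h.choose else 0

namespace IsMoorePenrose

variable {n : ℕ} {A B : Matrix (Fin n) (Fin n) ℝ}

theorem mul_mul_self_of_transpose_eq (hB : IsMoorePenrose A B) (hA : Aᵀ = A) :
    B * A * A = A := by
  calc B * A * A = (A * B * A)ᵀ := by
        rw [← hB.2.2.2, transpose_mul, transpose_mul, transpose_mul, hA, Matrix.mul_assoc]
  _ = A := by rw [hB.1, hA]

theorem mul_eq_mul_inv_of_mul_eq {k : ℕ} (hB : IsMoorePenrose A B) (hA : Aᵀ = A)
    {Y : Matrix (Fin n) (Fin k) ℝ} {N : Matrix (Fin k) (Fin k) ℝ} (hN : IsUnit N.det)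
    (hAY : A * Y = Y * N) : B * Y = Y * N⁻¹ := by
  have hAX : A * (Y * N⁻¹) = Y := by
    rw [← Matrix.mul_assoc, hAY, Matrix.mul_assoc, mul_nonsing_inv _ hN, Matrix.mul_one]
  have hX : Y * N⁻¹ = A * (Y * N⁻¹ * N⁻¹) := by rw [← Matrix.mul_assoc A (Y * N⁻¹), hAX]
  calc B * Y = B * A * A * (Y * N⁻¹ * N⁻¹) := by
        rw [Matrix.mul_assoc (B * A), ← hX, Matrix.mul_assoc, hAX]
  _ = Y * N⁻¹ := by rw [hB.mul_mul_self_of_transpose_eq hA, ← hX]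

end IsMoorePenrose

theorem isMoorePenrose_pinv {m n : ℕ} {A : Matrix (Fin m) (Fin n) ℝ}
    (h : ∃ B, IsMoorePenrose A B) : IsMoorePenrose A (pinv A) := by
  rw [pinv, dif_pos h]
  exact h.choose_spec

theorem isMoorePenrose_of_mul_eq_one {n : ℕ} {A B : Matrix (Fin n) (Fin n) ℝ} (h : A * B = 1) :
    IsMoorePenrose A B := by
  have h' : B * A = 1 := mul_eq_one_comm.mp h
  exact ⟨by rw [h, Matrix.one_mul], by rw [h', Matrix.one_mul], by rw [h, transpose_one],
    by rw [h', transpose_one]⟩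

theorem isMoorePenrose_transpose_mul_self {s d : ℕ} {W : Matrix (Fin s) (Fin d) ℝ}
    {R : Matrix (Fin d) (Fin s) ℝ} (hWR : W * R = 1) (hRW : (R * W)ᵀ = R * W) :
    IsMoorePenrose (Wᵀ * W) (R * Rᵀ) := by
  have hAB : Wᵀ * W * (R * Rᵀ) = R * W := by
    rw [Matrix.mul_assoc, ← Matrix.mul_assoc W, hWR, Matrix.one_mul, ← transpose_mul, hRW]
  have hBA : R * Rᵀ * (Wᵀ * W) = R * W := by
    rw [Matrix.mul_assoc, ← Matrix.mul_assoc Rᵀ, ← transpose_mul, hWR, transpose_one,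
      Matrix.one_mul]
  refine ⟨?_, ?_, by rw [hAB, hRW], by rw [hBA, hRW]⟩
  · rw [hAB, ← Matrix.mul_assoc, ← hRW, ← transpose_mul, ← Matrix.mul_assoc W R W, hWR,
      Matrix.one_mul]
  · rw [hBA, ← Matrix.mul_assoc, Matrix.mul_assoc R, hWR, Matrix.mul_one]

section Regularized

variable {s d : ℕ} (W : Matrix (Fin s) (Fin d) ℝ) (lam : ℝ)

theorem transpose_mul_self_add_smul_mul_transpose :
    (Wᵀ * W + lam • 1) * Wᵀ = Wᵀ * (W * Wᵀ + lam • 1) := by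
  simp only [Matrix.add_mul, Matrix.mul_add, Matrix.smul_mul, Matrix.mul_smul, Matrix.one_mul,
    Matrix.mul_one, Matrix.mul_assoc]

variable {W lam}

theorem transpose_mul_self_add_smul_mul_eq_one (hlam : lam ≠ 0)
    (hN : IsUnit (W * Wᵀ + lam • 1).det) :
    (Wᵀ * W + lam • 1) * (lam⁻¹ • (1 - Wᵀ * (W * Wᵀ + lam • 1)⁻¹ * W)) = 1 := by
  have hproj : (Wᵀ * W + lam • 1) * (Wᵀ * (W * Wᵀ + lam • 1)⁻¹ * W) = Wᵀ * W := by
    rw [← Matrix.mul_assoc, ← Matrix.mul_assoc, transpose_mul_self_add_smul_mul_transpose,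
      Matrix.mul_assoc Wᵀ, mul_nonsing_inv _ hN, Matrix.mul_one]
  rw [Matrix.mul_smul, Matrix.mul_sub, Matrix.mul_one, hproj, add_sub_cancel_left, smul_smul,
    inv_mul_cancel₀ hlam, one_smul]

theorem exists_isMoorePenrose_transpose_mul_self_add_smul
    (hN : IsUnit (W * Wᵀ + lam • 1).det) : ∃ B, IsMoorePenrose (Wᵀ * W + lam • 1) B := by
  rcases eq_or_ne lam 0 with rfl | hlam
  · simp only [zero_smul, add_zero] at hN ⊢
    refine ⟨_, isMoorePenrose_transpose_mul_self (R := Wᵀ * (W * Wᵀ)⁻¹) ?_ ?_⟩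
    · rw [← Matrix.mul_assoc, mul_nonsing_inv _ hN]
    · rw [transpose_mul, transpose_mul, transpose_nonsing_inv, transpose_mul, transpose_transpose,
        Matrix.mul_assoc]
  · exact ⟨_, isMoorePenrose_of_mul_eq_one (transpose_mul_self_add_smul_mul_eq_one hlam hN)⟩

theorem pinv_transpose_mul_self_add_smul_mul_transpose (hN : IsUnit (W * Wᵀ + lam • 1).det) :
    pinv (Wᵀ * W + lam • 1) * Wᵀ = Wᵀ * (W * Wᵀ + lam • 1)⁻¹ := by
  refine (isMoorePenrose_pinv (exists_isMoorePenrose_transpose_mul_self_add_smul hN)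
    ).mul_eq_mul_inv_of_mul_eq ?_ hN (transpose_mul_self_add_smul_mul_transpose W lam)
  simp [transpose_add, transpose_mul]

end Regularized

theorem sum_sq_eq_trace_mul_transpose {m n : ℕ} (X : Matrix (Fin m) (Fin n) ℝ) :
    ∑ i, ∑ j, X i j ^ 2 = trace (X * Xᵀ) := by
  simp [trace, mul_apply, sq]

theorem sum_sq_mul_one_sub_add_trace_eq {m d s : ℕ} (V : Matrix (Fin m) (Fin d) ℝ)
    (W : Matrix (Fin s) (Fin d) ℝ) {Q : Matrix (Fin s) (Fin s) ℝ} (hQ : Qᵀ = Q) (t : ℝ) :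
    (∑ i, ∑ j, (V * (1 - Wᵀ * Q * W) : Matrix (Fin m) (Fin d) ℝ) i j ^ 2)
        + t * trace (V * (Wᵀ * Q * Q * W) * Vᵀ)
      = trace (V * Vᵀ)
        + trace (V * Wᵀ * (Q * ((-2 : ℝ) • 1 + W * Wᵀ * Q) + t • (Q * Q)) * (V * Wᵀ)ᵀ) := by
  rw [sum_sq_eq_trace_mul_transpose]
  simp only [transpose_mul, transpose_sub, transpose_one, transpose_transpose, hQ]
  simp only [Matrix.mul_add, Matrix.add_mul, Matrix.mul_sub, Matrix.sub_mul, Matrix.mul_assoc,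
    Matrix.mul_one, Matrix.one_mul, Matrix.smul_mul, Matrix.mul_smul, trace_add, trace_sub,
    trace_smul, smul_eq_mul]
  ring

theorem kernelized_criterion_general {m d s : ℕ}
    (V : Matrix (Fin m) (Fin d) ℝ) (f : Fin s → Fin m)
    (lam t : ℝ) :
    let VS : Matrix (Fin s) (Fin d) ℝ := V.submatrix f id
    let K : Matrix (Fin m) (Fin m) ℝ := V * Vᵀ
    let KSS : Matrix (Fin s) (Fin s) ℝ := VS * VSᵀ
    let KcolS : Matrix (Fin m) (Fin s) ℝ := V * VSᵀ
    let M : Matrix (Fin d) (Fin d) ℝ := VSᵀ * VS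
    let P : Matrix (Fin d) (Fin d) ℝ := pinv (M + lam • 1)
    VS.rank = s → IsUnit (KSS + lam • 1).det →
    (∑ i, ∑ j, (((V * (1 - P * M) : Matrix (Fin m) (Fin d) ℝ)) i j) ^ 2)
        + t * Matrix.trace (V * (P * P * M) * Vᵀ)
      = Matrix.trace K
        + Matrix.trace (KcolS *
            ((KSS + lam • 1)⁻¹ * ((-2 : ℝ) • 1 + KSS * (KSS + lam • 1)⁻¹)
              + t • ((KSS + lam • 1)⁻¹ * (KSS + lam • 1)⁻¹)) * KcolSᵀ) := by
  intro VS K KSS KcolS M P _ hN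
  have hPV : P * VSᵀ = VSᵀ * (KSS + lam • 1)⁻¹ :=
    pinv_transpose_mul_self_add_smul_mul_transpose hN
  have hPM : P * M = VSᵀ * (KSS + lam • 1)⁻¹ * VS := by
    rw [← hPV, ← Matrix.mul_assoc]
  have hPPM : P * P * M = VSᵀ * (KSS + lam • 1)⁻¹ * (KSS + lam • 1)⁻¹ * VS := by
    rw [Matrix.mul_assoc P, hPM, ← Matrix.mul_assoc, ← Matrix.mul_assoc, hPV]
  have hinv_symm : ((KSS + lam • 1)⁻¹)ᵀ = (KSS + lam • 1)⁻¹ := by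
    simp [KSS, transpose_nonsing_inv, transpose_add, transpose_mul]
  rw [hPM, hPPM]
  exact sum_sq_mul_one_sub_add_trace_eq V VS hinv_symm t

theorem kernelized_criterion {m d s : ℕ}
    (V : Matrix (Fin m) (Fin d) ℝ) (f : Fin s → Fin m) (hf : Function.Injective f)
    (lam t : ℝ) (hlam : 0 ≤ lam) (ht : 0 ≤ t) :
    let VS : Matrix (Fin s) (Fin d) ℝ := V.submatrix f id
    let K : Matrix (Fin m) (Fin m) ℝ := V * Vᵀ
    let KSS : Matrix (Fin s) (Fin s) ℝ := VS * VSᵀ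
    let KcolS : Matrix (Fin m) (Fin s) ℝ := V * VSᵀ
    let M : Matrix (Fin d) (Fin d) ℝ := VSᵀ * VS
    let P : Matrix (Fin d) (Fin d) ℝ := pinv (M + lam • 1)
    VS.rank = s → IsUnit (KSS + lam • 1).det →
    (∑ i, ∑ j, (((V * (1 - P * M) : Matrix (Fin m) (Fin d) ℝ)) i j) ^ 2)
        + t * Matrix.trace (V * (P * P * M) * Vᵀ)
      = Matrix.trace K
        + Matrix.trace (KcolS *
            ((KSS + lam • 1)⁻¹ * ((-2 : ℝ) • 1 + KSS * (KSS + lam • 1)⁻¹)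
              + t • ((KSS + lam • 1)⁻¹ * (KSS + lam • 1)⁻¹)) * KcolSᵀ) :=
  kernelized_criterion_general V f lam t
end
end
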